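/- (Expected Ratio Optimality, first part.) Let m ≥ 2 and n ≥ 1, and let X(0), ..., X(n-1) be random vectors in ℝ^m with components bounded as X_min,i ≤ X_i(k) ≤ X_max,i, X_min,i > -1, X_max,i finite. Define 𝒳_{n,i} := ∏_{k=0}^{n-1} (1 + X_i(k)) - 1 and g_n(K) := (1/n) E[log(1 + K^T 𝒳_n)]. Let K* ∈ 𝒦 maximize g_n over the unit simplex 𝒦 = {K ∈ ℝ^m : K_i ≥ 0 for all i, ∑_{i=1}^m K_i = 1}. Then for every K ∈ 𝒦, E[(1 + K^T 𝒳_n) / (1 + K*^T 𝒳_n)] ≤ 1. -/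

import Mathlib

open MeasureTheory Finset Filter Topology Real

/-! Write `W_K := 1 + Kᵀ 𝒳_n`, which is affine in `K`, and `u := W_K / W_{K*} - 1 ≥ -1`.
Comparing `K*` with the mixtures `(1 - t) K* + t K` gives `E[log (1 + t u)] ≤ 0` for `t ∈ (0, 1]`.
With `log (1 + x) ≥ x - 2 x²` for `x ≥ -1/2` this becomes `t E[u] - 2 t² E[u²] ≤ 0` for
small `t > 0`; dividing by `t` and letting `t → 0⁺` yields `E[u] ≤ 0`. The returns being bounded
and bounded away from `-1`, all wealths `W_K` lie in a fixed interval `[c, C]` with `c > 0`,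
so everything is integrable. -/

lemma Real.sub_two_mul_sq_le_log_one_add {x : ℝ} (hx : -(1 / 2) ≤ x) :
    x - 2 * x ^ 2 ≤ log (1 + x) := by
  have hx1 : 0 < 1 + x := by linarith
  have hinv : (1 + x)⁻¹ ≤ 1 - x + 2 * x ^ 2 := by
    rw [inv_le_iff_one_le_mul₀ hx1]
    nlinarith [sq_nonneg x]
  linarith [one_sub_inv_le_log_of_pos hx1]

section Integrals

variable {Ω : Type*} [MeasurableSpace Ω] {μ : Measure Ω}

lemma integrable_log_one_add_mul [IsFiniteMeasure μ] {u : Ω → ℝ} (hu : ∀ ω, -1 ≤ u ω)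
    (hu2 : MemLp u 2 μ) {t : ℝ} (ht0 : 0 ≤ t) (ht : t ≤ 1 / 2) :
    Integrable (fun ω => log (1 + t * u ω)) μ := by
  have htu : ∀ ω, -(1 / 2) ≤ t * u ω := fun ω => by nlinarith [hu ω]
  refine integrable_of_le_of_le (g₁ := fun ω => t * u ω - 2 * t ^ 2 * u ω ^ 2)
    (g₂ := fun ω => t * u ω) ?_ (ae_of_all _ fun ω => ?_) (ae_of_all _ fun ω => ?_)
    (((hu2.integrable one_le_two).const_mul t).sub (hu2.integrable_sq.const_mul _))
    ((hu2.integrable one_le_two).const_mul t)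
  · exact (measurable_log.comp_aemeasurable
      ((hu2.aestronglyMeasurable.aemeasurable.const_mul t).const_add 1)).aestronglyMeasurable
  · linarith [sub_two_mul_sq_le_log_one_add (htu ω)]
  · linarith [log_le_sub_one_of_pos (show 0 < 1 + t * u ω by linarith [htu ω])]

lemma integral_nonpos_of_eventually_integral_log_one_add_mul_nonpos [IsFiniteMeasure μ]
    {u : Ω → ℝ} (hu : ∀ ω, -1 ≤ u ω) (hu2 : MemLp u 2 μ)
    (hlog : ∀ᶠ t in 𝓝[>] 0, ∫ ω, log (1 + t * u ω) ∂μ ≤ 0) :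
    ∫ ω, u ω ∂μ ≤ 0 := by
  have hbound : ∀ᶠ t in 𝓝[>] 0, ∫ ω, u ω ∂μ ≤ t * (2 * ∫ ω, u ω ^ 2 ∂μ) := by
    filter_upwards [hlog, Ioc_mem_nhdsGT one_half_pos] with t hlog_t ⟨ht0, ht⟩
    have htu : ∀ ω, -(1 / 2) ≤ t * u ω := fun ω => by nlinarith [hu ω]
    have hsecond_order :
        t * ∫ ω, u ω ∂μ - t * (t * (2 * ∫ ω, u ω ^ 2 ∂μ)) ≤ ∫ ω, log (1 + t * u ω) ∂μ :=
      calc t * ∫ ω, u ω ∂μ - t * (t * (2 * ∫ ω, u ω ^ 2 ∂μ))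
          = ∫ ω, (t * u ω - 2 * t ^ 2 * u ω ^ 2) ∂μ := by
            rw [integral_sub ((hu2.integrable one_le_two).const_mul t)
              (hu2.integrable_sq.const_mul _), integral_const_mul, integral_const_mul]
            ring
        _ ≤ ∫ ω, log (1 + t * u ω) ∂μ :=
            integral_mono (((hu2.integrable one_le_two).const_mul t).sub
              (hu2.integrable_sq.const_mul _)) (integrable_log_one_add_mul hu hu2 ht0.le ht)
              fun ω => by linarith [sub_two_mul_sq_le_log_one_add (htu ω)]
    exact (mul_le_mul_iff_right₀ ht0).mp (by linarith)
  have hlim : Tendsto (fun t : ℝ => t * (2 * ∫ ω, u ω ^ 2 ∂μ)) (𝓝[>] 0) (𝓝 0) :=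
    ((continuous_mul_const _).tendsto' 0 0 (zero_mul _)).mono_left nhdsWithin_le_nhds
  exact ge_of_tendsto hlim hbound

lemma integral_div_le_one_of_eventually_integral_log_le [IsProbabilityMeasure μ] {f g : Ω → ℝ}
    (hf : ∀ ω, 0 ≤ f ω) (hg : ∀ ω, 0 < g ω) (hfg : MemLp (fun ω => f ω / g ω) 2 μ)
    (hlog_g : Integrable (fun ω => log (g ω)) μ)
    (hopt : ∀ᶠ t in 𝓝[>] 0, ∫ ω, log ((1 - t) * g ω + t * f ω) ∂μ ≤ ∫ ω, log (g ω) ∂μ) :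
    ∫ ω, f ω / g ω ∂μ ≤ 1 := by
  have hu : ∀ ω, -1 ≤ f ω / g ω - 1 := fun ω => by linarith [div_nonneg (hf ω) (hg ω).le]
  have hu2 : MemLp (fun ω => f ω / g ω - 1) 2 μ := hfg.sub (memLp_const 1)
  have hlog_split : ∀ t ω, 0 < 1 + t * (f ω / g ω - 1) →
      log ((1 - t) * g ω + t * f ω) = log (g ω) + log (1 + t * (f ω / g ω - 1)) := by
    intro t ω ht
    rw [← log_mul (hg ω).ne' ht.ne']
    congr 1
    field_simp [(hg ω).ne']
    ring
  have hu_int := integral_nonpos_of_eventually_integral_log_one_add_mul_nonpos hu hu2 (by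
    filter_upwards [hopt, Ioc_mem_nhdsGT one_half_pos] with t hopt_t ⟨ht0, ht⟩
    have hpos : ∀ ω, 0 < 1 + t * (f ω / g ω - 1) := fun ω => by nlinarith [hu ω]
    simp_rw [hlog_split t _ (hpos _)] at hopt_t
    rw [integral_add hlog_g (integrable_log_one_add_mul hu hu2 ht0.le ht)] at hopt_t
    linarith)
  rw [integral_sub (hfg.integrable one_le_two) (integrable_const 1)] at hu_int
  simpa using hu_int

lemma memLp_div_of_mem_Icc [IsFiniteMeasure μ] {f g : Ω → ℝ} (hf : Measurable f)
    (hg : Measurable g) {b c : ℝ} (hc : 0 < c) (hfb : ∀ ω, f ω ∈ Set.Icc 0 b)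
    (hgc : ∀ ω, c ≤ g ω) (p : ENNReal) : MemLp (fun ω => f ω / g ω) p μ :=
  .of_bound (hf.div hg).aestronglyMeasurable (b / c) (ae_of_all _ fun ω => by
    rw [norm_div, Real.norm_of_nonneg (hfb ω).1, Real.norm_of_nonneg (hc.trans_le (hgc ω)).le]
    exact div_le_div₀ ((hfb ω).1.trans (hfb ω).2) (hfb ω).2 hc (hgc ω))

lemma integrable_log_of_mem_Icc [IsFiniteMeasure μ] {g : Ω → ℝ} (hg : Measurable g) {c C : ℝ}
    (hc : 0 < c) (hgc : ∀ ω, g ω ∈ Set.Icc c C) : Integrable (fun ω => log (g ω)) μ :=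
  integrable_of_le_of_le (measurable_log.comp hg).aestronglyMeasurable
    (ae_of_all _ fun ω => log_le_log hc (hgc ω).1)
    (ae_of_all _ fun ω => log_le_log (hc.trans_le (hgc ω).1) (hgc ω).2)
    (integrable_const (log c)) (integrable_const (log C))

end Integrals

section Portfolio

variable {Ω ι : Type*}

def compoundReturn (X : ℕ → Ω → ι → ℝ) (n : ℕ) (ω : Ω) (i : ι) : ℝ :=
  ∏ k ∈ range n, (1 + X k ω i) - 1

lemma one_add_compoundReturn_mem_Icc {X : ℕ → Ω → ι → ℝ} {n : ℕ} {ω : Ω} {i : ι} {a b : ℝ}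
    (ha : -1 ≤ a) (hX : ∀ k, a ≤ X k ω i ∧ X k ω i ≤ b) :
    1 + compoundReturn X n ω i ∈ Set.Icc ((1 + a) ^ n) ((1 + b) ^ n) := by
  have hpow (c : ℝ) : c ^ n = ∏ _k ∈ range n, c := by simp
  rw [compoundReturn, add_sub_cancel, hpow, hpow]
  exact ⟨prod_le_prod (fun _ _ => by linarith) fun k _ => by linarith [hX k],
    prod_le_prod (fun k _ => by linarith [hX k]) fun k _ => by linarith [hX k]⟩

lemma one_add_dotProduct_of_mem_stdSimplex [Fintype ι] {K : ι → ℝ} (hK : K ∈ stdSimplex ℝ ι)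
    (v : ι → ℝ) :
    1 + K ⬝ᵥ v = K ⬝ᵥ (1 + v) := by
  simp [dotProduct, mul_add, sum_add_distrib, hK.2, add_comm]

lemma dotProduct_pos_of_mem_stdSimplex [Fintype ι] {K v : ι → ℝ} (hK : K ∈ stdSimplex ℝ ι)
    (hv : ∀ i, 0 < v i) : 0 < K ⬝ᵥ v := by
  obtain ⟨i, -, hi⟩ := exists_lt_of_sum_lt (f := 0) (g := K) (s := univ) (by simp [hK.2])
  exact sum_pos' (fun j _ => mul_nonneg (hK.1 j) (hv j).le)
    ⟨i, mem_univ i, mul_pos hi (hv i)⟩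

lemma one_add_dotProduct_compoundReturn_mem_Icc [Fintype ι] {X : ℕ → Ω → ι → ℝ} {n : ℕ}
    {ω : Ω} {K : ι → ℝ} (hK : K ∈ stdSimplex ℝ ι) {Xmin Xmax : ι → ℝ} (hXmin : ∀ i, -1 ≤ Xmin i)
    (hX : ∀ k i, Xmin i ≤ X k ω i ∧ X k ω i ≤ Xmax i) :
    1 + K ⬝ᵥ compoundReturn X n ω ∈
      Set.Icc (K ⬝ᵥ fun i => (1 + Xmin i) ^ n) (K ⬝ᵥ fun i => (1 + Xmax i) ^ n) := by
  have hR i := one_add_compoundReturn_mem_Icc (n := n) (hXmin i) (hX · i)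
  rw [one_add_dotProduct_of_mem_stdSimplex hK]
  exact ⟨dotProduct_le_dotProduct_of_nonneg_left (fun i => (hR i).1) hK.1,
    dotProduct_le_dotProduct_of_nonneg_left (fun i => (hR i).2) hK.1⟩

lemma one_add_convexComb_dotProduct [Fintype ι] (K L v : ι → ℝ) (t : ℝ) :
    1 + ((1 - t) • K + t • L) ⬝ᵥ v = (1 - t) * (1 + K ⬝ᵥ v) + t * (1 + L ⬝ᵥ v) := by
  simp only [add_dotProduct, smul_dotProduct, smul_eq_mul]
  ring

lemma measurable_one_add_dotProduct_compoundReturn [Fintype ι] [MeasurableSpace Ω]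
    {X : ℕ → Ω → ι → ℝ} (hX : ∀ k, Measurable (X k)) (n : ℕ) (K : ι → ℝ) :
    Measurable fun ω => 1 + K ⬝ᵥ compoundReturn X n ω := by
  unfold dotProduct compoundReturn
  fun_prop

end Portfolio

theorem expected_ratio_optimality_general
    {Ω : Type*} [MeasurableSpace Ω] (μ : Measure Ω) [IsProbabilityMeasure μ]
    (m n : ℕ) (hn : 1 ≤ n)
    (X : ℕ → Ω → Fin m → ℝ) (hmeas : ∀ k, Measurable (X k))
    (Xmin Xmax : Fin m → ℝ)
    (hXmin : ∀ i, -1 < Xmin i)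
    (hbd : ∀ k (ω : Ω) (i : Fin m), Xmin i ≤ X k ω i ∧ X k ω i ≤ Xmax i)
    (Kstar : Fin m → ℝ) (hKstar0 : ∀ i, 0 ≤ Kstar i) (hKstar1 : ∑ i, Kstar i = 1)
    (hopt : ∀ K : Fin m → ℝ, (∀ i, 0 ≤ K i) → ∑ i, K i = 1 →
      (1 / (n : ℝ)) *
          ∫ ω, Real.log
            (1 + ∑ i, K i * ((∏ k ∈ Finset.range n, (1 + X k ω i)) - 1)) ∂μ ≤
        (1 / (n : ℝ)) *
          ∫ ω, Real.log
            (1 + ∑ i, Kstar i * ((∏ k ∈ Finset.range n, (1 + X k ω i)) - 1)) ∂μ) :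
    ∀ K : Fin m → ℝ, (∀ i, 0 ≤ K i) → ∑ i, K i = 1 →
      ∫ ω, (1 + ∑ i, K i * ((∏ k ∈ Finset.range n, (1 + X k ω i)) - 1)) /
            (1 + ∑ i, Kstar i * ((∏ k ∈ Finset.range n, (1 + X k ω i)) - 1)) ∂μ ≤ 1 := by
  intro K hK0 hK1
  show ∫ ω, (1 + K ⬝ᵥ compoundReturn X n ω) / (1 + Kstar ⬝ᵥ compoundReturn X n ω) ∂μ ≤ 1
  have hK : K ∈ stdSimplex ℝ (Fin m) := ⟨hK0, hK1⟩
  have hKstar : Kstar ∈ stdSimplex ℝ (Fin m) := ⟨hKstar0, hKstar1⟩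
  have hlo i : 0 < (1 + Xmin i) ^ n := pow_pos (by linarith [hXmin i]) n
  have hc := dotProduct_pos_of_mem_stdSimplex hKstar hlo
  have hW {J} (hJ : J ∈ stdSimplex ℝ (Fin m)) (ω : Ω) :=
    one_add_dotProduct_compoundReturn_mem_Icc (n := n) hJ (fun i => (hXmin i).le) (hbd · ω ·)
  have hWpos {J} (hJ : J ∈ stdSimplex ℝ (Fin m)) (ω : Ω) : 0 < 1 + J ⬝ᵥ compoundReturn X n ω :=
    (dotProduct_pos_of_mem_stdSimplex hJ hlo).trans_le (hW hJ ω).1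
  have hWmeas := measurable_one_add_dotProduct_compoundReturn hmeas n
  refine integral_div_le_one_of_eventually_integral_log_le (fun ω => (hWpos hK ω).le)
    (hWpos hKstar)
    (memLp_div_of_mem_Icc (hWmeas K) (hWmeas Kstar) hc
      (fun ω => ⟨(hWpos hK ω).le, (hW hK ω).2⟩) (fun ω => (hW hKstar ω).1) 2)
    (integrable_log_of_mem_Icc (hWmeas Kstar) hc (hW hKstar)) ?_
  filter_upwards [Ioc_mem_nhdsGT one_pos] with t ⟨ht0, ht1⟩
  have hmix := convex_stdSimplex ℝ (Fin m) hKstar hK (sub_nonneg.2 ht1) ht0.le (sub_add_cancel 1 t)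
  simp_rw [← one_add_convexComb_dotProduct]
  exact (mul_le_mul_iff_right₀ (one_div_pos.2 (Nat.cast_pos.2 hn))).mp (hopt _ hmix.1 hmix.2)

/-- Expected Ratio Optimality (first part): if `K*` maximizes the expected log growth `gₙ`
over the unit simplex, then `E[(1 + Kᵀ 𝒳ₙ)/(1 + K*ᵀ 𝒳ₙ)] ≤ 1` for every `K` in the simplex. -/
theorem expected_ratio_optimality
    {Ω : Type*} [MeasurableSpace Ω] (μ : Measure Ω) [IsProbabilityMeasure μ]
    (m n : ℕ) (hm : 2 ≤ m) (hn : 1 ≤ n)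
    (X : ℕ → Ω → Fin m → ℝ) (hmeas : ∀ k, Measurable (X k))
    (Xmin Xmax : Fin m → ℝ)
    (hXmin : ∀ i, -1 < Xmin i)
    (hbd : ∀ k (ω : Ω) (i : Fin m), Xmin i ≤ X k ω i ∧ X k ω i ≤ Xmax i)
    (Kstar : Fin m → ℝ) (hKstar0 : ∀ i, 0 ≤ Kstar i) (hKstar1 : ∑ i, Kstar i = 1)
    (hopt : ∀ K : Fin m → ℝ, (∀ i, 0 ≤ K i) → ∑ i, K i = 1 →
      (1 / (n : ℝ)) *
          ∫ ω, Real.log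
            (1 + ∑ i, K i * ((∏ k ∈ Finset.range n, (1 + X k ω i)) - 1)) ∂μ ≤
        (1 / (n : ℝ)) *
          ∫ ω, Real.log
            (1 + ∑ i, Kstar i * ((∏ k ∈ Finset.range n, (1 + X k ω i)) - 1)) ∂μ) :
    ∀ K : Fin m → ℝ, (∀ i, 0 ≤ K i) → ∑ i, K i = 1 →
      ∫ ω, (1 + ∑ i, K i * ((∏ k ∈ Finset.range n, (1 + X k ω i)) - 1)) /
            (1 + ∑ i, Kstar i * ((∏ k ∈ Finset.range n, (1 + X k ω i)) - 1)) ∂μ ≤ 1 :=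
  expected_ratio_optimality_general μ m n hn X hmeas Xmin Xmax hXmin hbd Kstar hKstar0 hKstar1 hopt
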